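/- Let A ⊆ ℝⁿ be a nonempty closed set, r > 0, and x a point with dist(x, A) = r at which the distance function δ_A(y) = dist(y, A) is differentiable. Then |∇δ_A(x)| = 1 and, setting T = {v : v • ∇δ_A(x) = 0}, the tangent cone of the level set S(A,r) = {z : dist(z,A) = r} at x satisfies Tan(S(A,r), x) ⊆ T. -/

import Mathlib

/-!
The distance function decreases at unit speed along the segment from `x` to a nearest point `a`
of `closure A`, so `d'` takes the value `-‖a - x‖` on `a - x`; together with the 1-Lipschitz
bound this forces `‖d'‖ = 1`. Since `infDist · A` is constant on the level set, its differential
maps the tangent cone of the level set into the tangent cone of a point, which is `{0}`.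
-/

open Metric Set Filter Topology AffineMap

/-- Tangent cone of a set `S` at a point `x`. -/
def tanCone {n : ℕ} (S : Set (EuclideanSpace ℝ (Fin n))) (x : EuclideanSpace ℝ (Fin n)) :
    Set (EuclideanSpace ℝ (Fin n)) :=
  {v | ∀ ε > (0 : ℝ), ∃ y ∈ S, ∃ t : ℝ, 0 < t ∧ ‖y - x‖ < ε ∧ ‖t • (y - x) - v‖ < ε}

section InfDist

variable {E : Type*} [NormedAddCommGroup E] [NormedSpace ℝ E] {A : Set E} {x a : E}

theorem infDist_lineMap_of_infDist_eq_dist (ha : a ∈ A) (hxa : infDist x A = dist x a) {t : ℝ}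
    (ht₀ : 0 ≤ t) (ht₁ : t ≤ 1) : infDist (lineMap x a t) A = (1 - t) * infDist x A := by
  have hfar : dist (lineMap x a t) a = (1 - t) * dist x a := by
    rw [dist_lineMap_right, Real.norm_of_nonneg (sub_nonneg.2 ht₁)]
  have hnear : dist x (lineMap x a t) = t * dist x a := by
    rw [dist_left_lineMap, Real.norm_of_nonneg ht₀]
  have hle := infDist_le_dist_of_mem (x := lineMap x a t) ha
  have hge := infDist_le_infDist_add_dist (x := x) (y := lineMap x a t) (s := A)
  rw [hxa] at hge ⊢
  linarith

theorem HasFDerivAt.infDist_apply_sub_eq {d' : E →L[ℝ] ℝ}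
    (hd : HasFDerivAt (infDist · A) d' x) (ha : a ∈ A) (hxa : infDist x A = dist x a) :
    d' (a - x) = -infDist x A := by
  have hline : HasDerivWithinAt (fun t : ℝ ↦ infDist (lineMap x a t) A) (d' (a - x))
      (Icc 0 1) 0 := by
    rw [← lineMap_apply_zero x a (k := ℝ)] at hd
    exact (hd.comp_hasDerivAt 0 hasDerivAt_lineMap).hasDerivWithinAt
  have haffine : HasDerivWithinAt (fun t : ℝ ↦ infDist (lineMap x a t) A) (-infDist x A)
      (Icc 0 1) 0 := by
    have : HasDerivAt (fun t : ℝ ↦ (1 - t) * infDist x A) (-infDist x A) 0 := by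
      simpa using ((hasDerivAt_id (0 : ℝ)).const_sub 1).mul_const (infDist x A)
    refine this.hasDerivWithinAt.congr (fun t ht ↦ ?_) ?_
    · exact infDist_lineMap_of_infDist_eq_dist ha hxa ht.1 ht.2
    · simp
  exact (uniqueDiffOn_Icc zero_lt_one 0 ⟨le_rfl, zero_le_one⟩).eq_deriv _ hline haffine

theorem HasFDerivAt.norm_eq_one_of_infDist_pos [ProperSpace E] {d' : E →L[ℝ] ℝ}
    (hd : HasFDerivAt (infDist · A) d' x) (hx : 0 < infDist x A) : ‖d'‖ = 1 := by
  have hne : (closure A).Nonempty := by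
    by_contra h
    rw [not_nonempty_iff_eq_empty, closure_empty_iff] at h
    simp [h] at hx
  obtain ⟨a, ha, hxa⟩ := isClosed_closure.exists_infDist_eq_dist hne x
  simp only [← infDist_closure (s := A)] at hd hx
  have hda := hd.infDist_apply_sub_eq ha hxa
  rw [hxa] at hx hda
  refine le_antisymm (by simpa using hd.le_of_lipschitz (lipschitz_infDist_pt _)) ?_
  have := d'.le_opNorm (a - x)
  rw [hda, ← dist_eq_norm', norm_neg, Real.norm_of_nonneg hx.le] at this
  exact le_of_mul_le_mul_right (by rwa [one_mul]) hx

end InfDist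

theorem tanCone_subset_tangentConeAt {n : ℕ} (S : Set (EuclideanSpace ℝ (Fin n)))
    (x : EuclideanSpace ℝ (Fin n)) : tanCone S x ⊆ tangentConeAt ℝ S x := by
  intro v hv
  choose y hyS t _ hyx htv using fun k : ℕ ↦ hv (1 / (k + 1)) Nat.one_div_pos_of_nat
  have hε : Tendsto (fun k : ℕ ↦ 1 / ((k : ℝ) + 1)) atTop (𝓝 0) :=
    tendsto_one_div_add_atTop_nhds_zero_nat
  refine mem_tangentConeAt_of_seq atTop t (fun k ↦ y k - x) ?_ ?_ ?_
  · exact squeeze_zero_norm (fun k ↦ (hyx k).le) hε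
  · simpa using Eventually.of_forall (f := atTop) hyS
  · refine tendsto_iff_norm_sub_tendsto_zero.2 (squeeze_zero_norm (fun k ↦ ?_) hε)
    simpa using (htv k).le

theorem HasFDerivAt.tangentConeAt_subset_ker {𝕜 E F : Type*} [NontriviallyNormedField 𝕜]
    [NormedAddCommGroup E] [NormedSpace 𝕜 E] [NormedAddCommGroup F] [NormedSpace 𝕜 F]
    {f : E → F} {f' : E →L[𝕜] F} {S : Set E} {x : E} (hf : HasFDerivAt f f' x)
    (hS : ∀ z ∈ S, f z = f x) : tangentConeAt 𝕜 S x ⊆ {v | f' v = 0} := by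
  intro v hv
  have himage : f '' S ⊆ {f x} := by
    rintro _ ⟨z, hz, rfl⟩
    exact hS z hz
  have hisolated : ¬AccPt (f x) (𝓟 {f x}) := by
    rw [accPt_principal_iff_nhdsWithin]
    simp
  exact tangentConeAt_subset_zero hisolated
    (tangentConeAt_mono himage (hf.hasFDerivWithinAt.mapsTo_tangent_cone hv))

theorem stmt_9_general {n : ℕ} (A : Set (EuclideanSpace ℝ (Fin n)))
    (r : ℝ) (hr : 0 < r)
    (x : EuclideanSpace ℝ (Fin n)) (hx : Metric.infDist x A = r)
    (d' : EuclideanSpace ℝ (Fin n) →L[ℝ] ℝ)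
    (hd : HasFDerivAt (fun y => Metric.infDist y A) d' x) :
    ‖d'‖ = 1 ∧
      tanCone {z | Metric.infDist z A = r} x ⊆ {v | d' v = 0} := by
  refine ⟨hd.norm_eq_one_of_infDist_pos (hx ▸ hr), ?_⟩
  subst hx
  exact (tanCone_subset_tangentConeAt _ x).trans (hd.tangentConeAt_subset_ker fun _ hz ↦ hz)

theorem stmt_9 {n : ℕ} (A : Set (EuclideanSpace ℝ (Fin n)))
    (hA : IsClosed A) (hne : A.Nonempty) (r : ℝ) (hr : 0 < r)
    (x : EuclideanSpace ℝ (Fin n)) (hx : Metric.infDist x A = r)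
    (d' : EuclideanSpace ℝ (Fin n) →L[ℝ] ℝ)
    (hd : HasFDerivAt (fun y => Metric.infDist y A) d' x) :
    ‖d'‖ = 1 ∧
      tanCone {z | Metric.infDist z A = r} x ⊆ {v | d' v = 0} :=
  stmt_9_general A r hr x hx d' hd
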